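/- Let $\gamma>1$ and $k>0$. For all reals $a>k\ge b\ge 0$, $$\frac{2\gamma-1}{\gamma^2}\,(a^{\gamma}-k^{\gamma-1}b)^2\ \le\ (a-b)\,(a^{2\gamma-1}-k^{2\gamma-2}b).$$ -/

import Mathlib

/-! The case `b = k` is the Cauchy–Schwarz inequality `(∫ f)² ≤ (a - k) ∫ f²` for
`f t = t^(γ-1)` on `[k, a]`. For `b < k`, both sides split into the part over `[k, a]` and the part
`k^(γ-1) (k - b)`, resp. `(k - b) · k^(2γ-2) (k - b)`, over `[b, k]`, where the second
estimate is an equality; two such estimates add up by Cauchy–Schwarz in `ℝ²`. -/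

open Real MeasureTheory intervalIntegral

theorem sq_integral_le_mul_integral_sq {f : ℝ → ℝ} {k a : ℝ} (hka : k ≤ a)
    (hf : IntervalIntegrable f volume k a)
    (hf2 : IntervalIntegrable (fun t => f t ^ 2) volume k a) :
    (∫ t in k..a, f t) ^ 2 ≤ (a - k) * ∫ t in k..a, f t ^ 2 := by
  rcases hka.eq_or_lt with rfl | hka
  · simp
  set I := ∫ t in k..a, f t
  set m := I / (a - k)
  have hm : m * (a - k) = I := div_mul_cancel₀ _ (sub_pos.2 hka).ne'
  have hvar : 0 ≤ ∫ t in k..a, (f t - m) ^ 2 :=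
    integral_nonneg hka.le fun t _ => sq_nonneg _
  have hexpand : ∫ t in k..a, (f t - m) ^ 2
      = (∫ t in k..a, f t ^ 2) - 2 * m * I + m ^ 2 * (a - k) := by
    simp only [sub_sq]
    rw [integral_add (hf2.sub ((hf.const_mul 2).mul_const m)) intervalIntegrable_const,
      integral_sub hf2 ((hf.const_mul 2).mul_const m), intervalIntegral.integral_mul_const,
      intervalIntegral.integral_const_mul, intervalIntegral.integral_const, smul_eq_mul]
    ring
  rw [hexpand] at hvar
  nlinarith [mul_nonneg (sub_pos.2 hka).le hvar, hm]

theorem sq_rpow_sub_rpow_le {γ k a : ℝ} (hγ : 1 / 2 < γ) (hk : 0 ≤ k) (hka : k ≤ a) :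
    (2 * γ - 1) * (a ^ γ - k ^ γ) ^ 2 ≤
      γ ^ 2 * ((a - k) * (a ^ (2 * γ - 1) - k ^ (2 * γ - 1))) := by
  have hint : IntervalIntegrable (fun t : ℝ => t ^ (γ - 1)) volume k a :=
    intervalIntegrable_rpow' (by linarith)
  have hsq : Set.EqOn (fun t : ℝ => t ^ (2 * γ - 2)) (fun t => (t ^ (γ - 1)) ^ 2)
      (Set.uIcc k a) := by
    intro t ht
    have ht : 0 ≤ t := hk.trans (Set.uIcc_of_le hka ▸ ht).1
    simp only
    rw [← rpow_natCast, ← rpow_mul ht]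
    ring_nf
  have hint2 : IntervalIntegrable (fun t : ℝ => (t ^ (γ - 1)) ^ 2) volume k a :=
    (intervalIntegrable_rpow' (by linarith)).congr (hsq.mono Set.Ioc_subset_Icc_self)
  have hcs := sq_integral_le_mul_integral_sq hka hint hint2
  rw [← integral_congr hsq, integral_rpow (Or.inl (by linarith)),
    integral_rpow (Or.inl (by linarith))] at hcs
  rw [show γ - 1 + 1 = γ by ring, show 2 * γ - 2 + 1 = 2 * γ - 1 by ring, div_pow,
    mul_div_assoc', div_le_div_iff₀ (by positivity) (by linarith)] at hcs
  linear_combination hcs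

theorem mul_sq_add_le_of_mul_sq_le {c X Y s t P Q : ℝ} (hc : 0 ≤ c)
    (hs : 0 ≤ s) (ht : 0 ≤ t) (hP : 0 ≤ P) (hQ : 0 ≤ Q) (hX : c * X ^ 2 ≤ s * P) (hY : c * Y ^ 2 ≤ t * Q) :
    c * (X + Y) ^ 2 ≤ (s + t) * (P + Q) := by
  have hprod : (c * X * Y) ^ 2 ≤ (s * Q) * (t * P) :=
    calc (c * X * Y) ^ 2 = (c * X ^ 2) * (c * Y ^ 2) := by ring
      _ ≤ (s * P) * (t * Q) := mul_le_mul hX hY (by positivity) (by positivity)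
      _ = (s * Q) * (t * P) := by ring
  have hcross : 2 * (c * X * Y) ≤ s * Q + t * P := by
    refine (le_abs_self _).trans (abs_le_of_sq_le_sq ?_ (by positivity))
    nlinarith [four_mul_le_sq_add (s * Q) (t * P)]
  nlinarith

theorem stmt3_general (γ k a b : ℝ) (hγ : 1 < γ) (hk : 0 < k) (hbk : b ≤ k)
    (hka : k < a) :
    (2 * γ - 1) / γ ^ 2 * (a ^ γ - k ^ (γ - 1) * b) ^ 2 ≤
      (a - b) * (a ^ (2 * γ - 1) - k ^ (2 * γ - 2) * b) := by
  set c := (2 * γ - 1) / γ ^ 2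
  have hc : 0 ≤ c := div_nonneg (by linarith) (sq_nonneg γ)
  have hkb : 0 ≤ k - b := sub_nonneg.2 hbk
  have hc1 : c ≤ 1 := by
    rw [div_le_one (by positivity)]
    nlinarith [sq_nonneg (γ - 1)]
  have hX : c * (a ^ γ - k ^ γ) ^ 2 ≤ (a - k) * (a ^ (2 * γ - 1) - k ^ (2 * γ - 1)) := by
    rw [div_mul_eq_mul_div, div_le_iff₀ (by positivity), mul_comm _ (γ ^ 2)]
    exact sq_rpow_sub_rpow_le (by linarith) hk.le hka.le
  have hY : c * (k ^ (γ - 1) * (k - b)) ^ 2 ≤ (k - b) * (k ^ (2 * γ - 2) * (k - b)) := by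
    have hsq : (k ^ (γ - 1) * (k - b)) ^ 2 = (k - b) * (k ^ (2 * γ - 2) * (k - b)) := by
      rw [mul_pow, ← rpow_natCast, ← rpow_mul hk.le]
      ring_nf
    rw [hsq]
    exact mul_le_of_le_one_left (mul_nonneg hkb (mul_nonneg (rpow_nonneg hk.le _) hkb)) hc1
  have hsplit := mul_sq_add_le_of_mul_sq_le hc (sub_nonneg.2 hka.le) hkb
    (sub_nonneg.2 (rpow_le_rpow hk.le hka.le (by linarith)))
    (mul_nonneg (rpow_nonneg hk.le _) hkb) hX hY
  have hkγ : k ^ γ = k ^ (γ - 1) * k := by rw [← rpow_add_one hk.ne']; ring_nf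
  have hk2γ : k ^ (2 * γ - 1) = k ^ (2 * γ - 2) * k := by rw [← rpow_add_one hk.ne']; ring_nf
  calc c * (a ^ γ - k ^ (γ - 1) * b) ^ 2
      = c * ((a ^ γ - k ^ γ) + k ^ (γ - 1) * (k - b)) ^ 2 := by rw [hkγ]; ring
    _ ≤ ((a - k) + (k - b)) *
        ((a ^ (2 * γ - 1) - k ^ (2 * γ - 1)) + k ^ (2 * γ - 2) * (k - b)) := hsplit
    _ = (a - b) * (a ^ (2 * γ - 1) - k ^ (2 * γ - 2) * b) := by rw [hk2γ]; ring

theorem stmt3 (γ k a b : ℝ) (hγ : 1 < γ) (hk : 0 < k) (hb : 0 ≤ b) (hbk : b ≤ k)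
    (hka : k < a) :
    (2 * γ - 1) / γ ^ 2 * (a ^ γ - k ^ (γ - 1) * b) ^ 2 ≤
      (a - b) * (a ^ (2 * γ - 1) - k ^ (2 * γ - 2) * b) :=
  stmt3_general γ k a b hγ hk hbk hka
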